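/- Let D be a positive integer, p₀ : ℝ^D → ℝ an integrable nonnegative function with ∫ p₀ = 1, and ψ, σ : [0,1] → (0, ∞) functions such that λ(t) := σ(t)/ψ(t) is injective. Define p(x, t) = ∫_{ℝ^D} p₀(x₀) N(x; ψ(t) x₀, σ²(t) I_D) dx₀ and ϱ(x, δ) = ∫_{ℝ^D} p₀(x₀) N(x; x₀, e^{2δ} I_D) dx₀. Then for any δ in the image of log ∘ λ, setting t(δ) = λ^{−1}(e^δ), it holds that log ϱ(x, δ) = D log ψ(t(δ)) + log p(ψ(t(δ)) x, t(δ)), provided ϱ(x, δ) > 0. -/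
import Mathlib


open MeasureTheory Real Filter Topology

/-- The isotropic Gaussian density `N(z; μ, τ² I_D) = (2π τ²)^{−D/2} exp(−‖z − μ‖²/(2τ²))`
on `ℝ^D`. -/
noncomputable def gaussPdf (D : ℕ) (z μ : EuclideanSpace ℝ (Fin D)) (τ2 : ℝ) : ℝ :=
  (2 * π * τ2) ^ (-(D : ℝ) / 2) * Real.exp (-‖z - μ‖ ^ 2 / (2 * τ2))

lemma gauss_scale (D : ℕ) (x x₀ : EuclideanSpace ℝ (Fin D)) (a s : ℝ)
    (ha : 0 < a) (hs : 0 < s) :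
    gaussPdf D x x₀ ((s / a) ^ 2) = a ^ D * gaussPdf D (a • x) (a • x₀) (s ^ 2) := by
  unfold gaussPdf
  have hnorm : ‖a • x - a • x₀‖ = a * ‖x - x₀‖ := by
    rw [← smul_sub, norm_smul, Real.norm_eq_abs, abs_of_pos ha]
  have hconst : (2 * π * (s / a) ^ 2) ^ (-(D : ℝ) / 2)
      = a ^ D * (2 * π * s ^ 2) ^ (-(D : ℝ) / 2) := by
    have h1 : 2 * π * (s / a) ^ 2 = (2 * π * s ^ 2) / a ^ 2 := by
      field_simp
    rw [h1, Real.div_rpow (by positivity) (by positivity)]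
    have h2 : ((a : ℝ) ^ 2) ^ (-(D : ℝ) / 2) = (a ^ D)⁻¹ := by
      rw [← Real.rpow_natCast a 2, ← Real.rpow_mul ha.le]
      have h3 : ((2 : ℕ) : ℝ) * (-(D : ℝ) / 2) = -(D : ℝ) := by push_cast; ring
      rw [h3, Real.rpow_neg ha.le, Real.rpow_natCast]
    rw [h2, div_eq_mul_inv, inv_inv, mul_comm]
  have hexpo : -‖x - x₀‖ ^ 2 / (2 * (s / a) ^ 2) = -‖a • x - a • x₀‖ ^ 2 / (2 * s ^ 2) := by
    rw [hnorm, mul_pow]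
    field_simp
  rw [hconst, hexpo]; ring

/-- Equation (11): the Gaussian convolution `ϱ(x, δ)` of the data density can be computed
from the diffusion model marginals `p(·, t)` via
`log ϱ(x, δ) = D log ψ(t(δ)) + log p(ψ(t(δ)) x, t(δ))`, where `t(δ) = λ⁻¹(e^δ)` with
`λ = σ/ψ` injective. Here `t` ranges over `[0,1]` and `δ` is admissible when
`e^δ = λ(t)` for some such `t`. -/
theorem log_convolution_eq_log_marginal
    (D : ℕ) (hD : 0 < D)
    (p₀ : EuclideanSpace ℝ (Fin D) → ℝ)
    (hp₀_int : Integrable p₀)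
    (hp₀_nonneg : ∀ x, 0 ≤ p₀ x)
    (hp₀_prob : ∫ x, p₀ x = 1)
    (ψ σ : ℝ → ℝ)
    (hψ_pos : ∀ t ∈ Set.Icc (0 : ℝ) 1, 0 < ψ t)
    (hσ_pos : ∀ t ∈ Set.Icc (0 : ℝ) 1, 0 < σ t)
    (hlam_inj : Set.InjOn (fun t => σ t / ψ t) (Set.Icc (0 : ℝ) 1))
    (p : EuclideanSpace ℝ (Fin D) → ℝ → ℝ)
    (hp : ∀ x t, p x t = ∫ x₀, p₀ x₀ * gaussPdf D x (ψ t • x₀) (σ t ^ 2))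
    (ϱ : EuclideanSpace ℝ (Fin D) → ℝ → ℝ)
    (hϱ : ∀ x δ, ϱ x δ = ∫ x₀, p₀ x₀ * gaussPdf D x x₀ (Real.exp (2 * δ)))
    (x : EuclideanSpace ℝ (Fin D)) (δ : ℝ) :
    ∀ t ∈ Set.Icc (0 : ℝ) 1, σ t / ψ t = Real.exp δ → 0 < ϱ x δ →
      Real.log (ϱ x δ) = (D : ℝ) * Real.log (ψ t) + Real.log (p (ψ t • x) t) := by
  intro t ht hlam hpos
  have hψ := hψ_pos t ht
  have hσ := hσ_pos t ht
  have hexp : Real.exp (2 * δ) = (σ t / ψ t) ^ 2 := by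
    rw [hlam, two_mul, Real.exp_add, sq]
  have key : ϱ x δ = ψ t ^ D * p (ψ t • x) t := by
    rw [hϱ, hp]
    have h : ∀ x₀, p₀ x₀ * gaussPdf D x x₀ (Real.exp (2 * δ))
        = ψ t ^ D * (p₀ x₀ * gaussPdf D (ψ t • x) (ψ t • x₀) (σ t ^ 2)) := by
      intro x₀
      rw [hexp, gauss_scale D x x₀ (ψ t) (σ t) hψ hσ]; ring
    simp_rw [h]
    exact integral_const_mul _ _
  have hppos : 0 < p (ψ t • x) t := by
    have h0 : (0:ℝ) < ψ t ^ D := pow_pos hψ D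
    nlinarith [key ▸ hpos]
  rw [key, Real.log_mul (by positivity) (ne_of_gt hppos), Real.log_pow]
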